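/- Consider the four skew-symmetric 2-forms on ℂ⁶ (basis e₀,…,e₅): ω₀ = e₁∧e₅ + e₃∧e₄, ω₁ = e₀∧e₅ − e₂∧e₃, ω₂ = e₀∧e₂ + e₁∧e₃, ω₃ = e₀∧e₃ + e₁∧e₄. Then ω₀∧ω₃ + ω₁∧ω₂ = 0 in ⋀⁴ℂ⁶, and the Pfaffian of x₀ω₀ + x₁ω₁ + x₂ω₂ + x₃ω₃ equals (up to a nonzero constant) x₀²x₂ + x₁²x₃, the equation of Cayley's ruled cubic surface. -/

import Mathlib

/-!
Write the pencil `x₀ω₀ + x₁ω₁ + x₂ω₂ + x₃ω₃` as `∑_{i<j} aᵢⱼ eᵢ∧eⱼ` for a skew matrix `a`. The cube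
of such a 2-form is `3! · Pf(a) · e₀∧…∧e₅`, because only the triples of terms whose index pairs form
a perfect matching of `{0,…,5}` survive, each with the sign of the matching. For the pencil only two
matchings carry nonzero entries, `a₀₂a₁₅a₃₄ = x₂x₀²` and `a₀₅a₁₄a₂₃ = -x₁²x₃`, so `Pf(a) = -(x₀²x₂ + x₁²x₃)`.
-/

open ExteriorAlgebra

noncomputable section

abbrev V6 := Fin 6 → ℂ

/-- standard basis vectors of ℂ⁶ -/
def e (i : Fin 6) : V6 := Pi.single i 1

/-- image of basis vectors in the exterior algebra -/
def ev (i : Fin 6) : ExteriorAlgebra ℂ V6 := ExteriorAlgebra.ι ℂ (e i)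

/-- the volume element e₀∧e₁∧e₂∧e₃∧e₄∧e₅ -/
def vol : ExteriorAlgebra ℂ V6 := ev 0 * ev 1 * ev 2 * ev 3 * ev 4 * ev 5

namespace ExteriorAlgebra

variable {R M : Type*} [CommRing R] [AddCommGroup M] [Module R M]

theorem ι_mul_ι_anticomm (x y : M) : ι R x * ι R y = -(ι R y * ι R x) :=
  eq_neg_of_add_eq_zero_left (ι_add_mul_swap x y)

theorem ι_mul_ι_mul_anticomm (x y : M) (z : ExteriorAlgebra R M) :
    ι R x * (ι R y * z) = -(ι R y * (ι R x * z)) := by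
  rw [← mul_assoc, ι_mul_ι_anticomm, neg_mul, mul_assoc]

theorem ι_mul_ι_mul_self (x : M) (z : ExteriorAlgebra R M) : ι R x * (ι R x * z) = 0 := by
  rw [← mul_assoc, ι_sq_zero, zero_mul]

end ExteriorAlgebra

theorem ev_mul_self (i : Fin 6) : ev i * ev i = 0 := ι_sq_zero _

theorem ev_mul_ev_mul_self (i : Fin 6) (z : ExteriorAlgebra ℂ V6) : ev i * (ev i * z) = 0 :=
  ι_mul_ι_mul_self _ _

-- Oriented by `j < i`, these are terminating simp lemmas sorting products of basis vectors.
theorem ev_mul_ev_of_lt {i j : Fin 6} (_ : j < i) : ev i * ev j = -(ev j * ev i) :=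
  ι_mul_ι_anticomm _ _

theorem ev_mul_ev_mul_of_lt {i j : Fin 6} (_ : j < i) (z : ExteriorAlgebra ℂ V6) :
    ev i * (ev j * z) = -(ev j * (ev i * z)) :=
  ι_mul_ι_mul_anticomm _ _ _

def twoForm (A : Matrix (Fin 6) (Fin 6) ℂ) : ExteriorAlgebra ℂ V6 :=
  ∑ i, ∑ j with i < j, A i j • (ev i * ev j)

def pfaffian6 (A : Matrix (Fin 6) (Fin 6) ℂ) : ℂ :=
  A 0 1 * A 2 3 * A 4 5 - A 0 1 * A 2 4 * A 3 5 + A 0 1 * A 2 5 * A 3 4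
  - A 0 2 * A 1 3 * A 4 5 + A 0 2 * A 1 4 * A 3 5 - A 0 2 * A 1 5 * A 3 4
  + A 0 3 * A 1 2 * A 4 5 - A 0 3 * A 1 4 * A 2 5 + A 0 3 * A 1 5 * A 2 4
  - A 0 4 * A 1 2 * A 3 5 + A 0 4 * A 1 3 * A 2 5 - A 0 4 * A 1 5 * A 2 3
  + A 0 5 * A 1 2 * A 3 4 - A 0 5 * A 1 3 * A 2 4 + A 0 5 * A 1 4 * A 2 3

set_option maxHeartbeats 1000000 in
theorem twoForm_cube (A : Matrix (Fin 6) (Fin 6) ℂ) :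
    twoForm A * twoForm A * twoForm A = (6 * pfaffian6 A) • vol := by
  simp +decide only [twoForm, Finset.sum_filter, Fin.sum_univ_succ, Fin.sum_univ_zero]
  simp +decide [vol, pfaffian6, mul_add, add_mul, smul_add, smul_smul, mul_assoc,
    ev_mul_self, ev_mul_ev_mul_self, ev_mul_ev_of_lt, ev_mul_ev_mul_of_lt]
  module

def cayleyPencilMatrix (x₀ x₁ x₂ x₃ : ℂ) : Matrix (Fin 6) (Fin 6) ℂ :=
  !![0, 0, x₂, x₃, 0, x₁;
     0, 0, 0, x₂, x₃, x₀;
     -x₂, 0, 0, -x₁, 0, 0;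
     -x₃, -x₂, x₁, 0, x₀, 0;
     0, -x₃, 0, -x₀, 0, 0;
     -x₁, -x₀, 0, 0, 0, 0]

theorem twoForm_cayleyPencilMatrix (x₀ x₁ x₂ x₃ : ℂ) :
    twoForm (cayleyPencilMatrix x₀ x₁ x₂ x₃) =
      x₀ • (ev 1 * ev 5 + ev 3 * ev 4) + x₁ • (ev 0 * ev 5 - ev 2 * ev 3) +
        x₂ • (ev 0 * ev 2 + ev 1 * ev 3) + x₃ • (ev 0 * ev 3 + ev 1 * ev 4) := by
  simp +decide [twoForm, cayleyPencilMatrix, Finset.sum_filter, Fin.sum_univ_succ]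
  module

theorem pfaffian6_cayleyPencilMatrix (x₀ x₁ x₂ x₃ : ℂ) :
    pfaffian6 (cayleyPencilMatrix x₀ x₁ x₂ x₃) = -(x₀ ^ 2 * x₂ + x₁ ^ 2 * x₃) := by
  simp [pfaffian6, cayleyPencilMatrix]
  ring

/-- For ω₀ = e₁∧e₅ + e₃∧e₄, ω₁ = e₀∧e₅ − e₂∧e₃, ω₂ = e₀∧e₂ + e₁∧e₃,
ω₃ = e₀∧e₃ + e₁∧e₄: the relation ω₀∧ω₃ + ω₁∧ω₂ = 0 holds, and the Pfaffian of
x₀ω₀ + x₁ω₁ + x₂ω₂ + x₃ω₃ equals, up to a fixed nonzero constant, x₀²x₂ + x₁²x₃,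
the equation of Cayley's ruled cubic surface. -/
theorem cayley_pfaffian
    (ω₀ ω₁ ω₂ ω₃ : ExteriorAlgebra ℂ V6)
    (h₀ : ω₀ = ev 1 * ev 5 + ev 3 * ev 4)
    (h₁ : ω₁ = ev 0 * ev 5 - ev 2 * ev 3)
    (h₂ : ω₂ = ev 0 * ev 2 + ev 1 * ev 3)
    (h₃ : ω₃ = ev 0 * ev 3 + ev 1 * ev 4) :
    ω₀ * ω₃ + ω₁ * ω₂ = 0 ∧
    ∃ k : ℂ, k ≠ 0 ∧ ∀ x₀ x₁ x₂ x₃ : ℂ,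
      (x₀ • ω₀ + x₁ • ω₁ + x₂ • ω₂ + x₃ • ω₃) *
      (x₀ • ω₀ + x₁ • ω₁ + x₂ • ω₂ + x₃ • ω₃) *
      (x₀ • ω₀ + x₁ • ω₁ + x₂ • ω₂ + x₃ • ω₃)
        = (k * (x₀^2 * x₂ + x₁^2 * x₃)) • vol := by
  subst h₀ h₁ h₂ h₃
  refine ⟨?_, -6, by norm_num, fun x₀ x₁ x₂ x₃ => ?_⟩
  · simp +decide [mul_add, add_mul, sub_mul, mul_assoc,
      ev_mul_self, ev_mul_ev_mul_self, ev_mul_ev_of_lt, ev_mul_ev_mul_of_lt]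
  · rw [← twoForm_cayleyPencilMatrix, twoForm_cube, pfaffian6_cayleyPencilMatrix]
    ring_nf
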